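/- arXiv:2110.08027 — 6 statements merged into one kernel-verified Lean document; each statement's English description precedes it below -/
import Mathlib

section
/- The differential of F(z) = [(τ/√(1−τ²), z)] is isometric from the Berger metric to the Fubini–Study metric: for z ∈ S^{2n+1} and u, v ∈ T_z S^{2n+1}, writing û = (0,u) and v̂ = (0,v) in ℂ^{n+2} and letting û^H = û − (1−τ²) g(u, iz)·i·(τ/√(1−τ²), z) be the horizontal lift, one has g(û^H, v̂^H) = g(u,v) − (1−τ²) g(u,iz) g(v,iz). -/
open scoped BigOperators

/-- The real Euclidean inner product on `ℂ^m ≅ ℝ^{2m}`. -/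
noncomputable def gR {m : ℕ} (v w : Fin m → ℂ) : ℝ :=
  ∑ i, (starRingEnd ℂ (v i) * w i).re

lemma gR_comm {m : ℕ} (v w : Fin m → ℂ) : gR v w = gR w v := by
  unfold gR
  refine Finset.sum_congr rfl fun i _ => ?_
  simp [Complex.mul_re, Complex.conj_re, Complex.conj_im]
  ring

lemma gR_expand {m : ℕ} (a b : ℝ) (x y p : Fin m → ℂ) :
    gR (x - a • (Complex.I • p)) (y - b • (Complex.I • p)) =
      gR x y - b * gR x (Complex.I • p) - a * gR (Complex.I • p) y + a * b * gR p p := by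
  unfold gR
  rw [Finset.mul_sum, Finset.mul_sum, Finset.mul_sum, ← Finset.sum_sub_distrib,
    ← Finset.sum_sub_distrib, ← Finset.sum_add_distrib]
  refine Finset.sum_congr rfl fun i _ => ?_
  simp only [Pi.sub_apply, Pi.smul_apply, smul_eq_mul, Complex.real_smul]
  simp [Complex.mul_re, Complex.mul_im, Complex.sub_re, Complex.sub_im,
    Complex.conj_re, Complex.conj_im, Complex.I_re, Complex.I_im]
  ring

lemma gR_cons_smulI {m : ℕ} (c : ℝ) (u z : Fin m → ℂ) :
    gR (Fin.cons 0 u : Fin (m + 1) → ℂ)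
      (Complex.I • (Fin.cons (c : ℂ) z : Fin (m + 1) → ℂ)) = gR u (Complex.I • z) := by
  unfold gR
  rw [Fin.sum_univ_succ]
  simp

lemma gR_cons_self {m : ℕ} (c : ℝ) (z : Fin m → ℂ) :
    gR (Fin.cons (c : ℂ) z : Fin (m + 1) → ℂ) (Fin.cons (c : ℂ) z) = c ^ 2 + gR z z := by
  unfold gR
  rw [Fin.sum_univ_succ]
  simp [Complex.mul_re, Complex.conj_re, Complex.conj_im]
  ring

/-- The differential of `F(z) = [(τ/√(1−τ²), z)]` is isometric from the Berger metric
to the Fubini–Study metric: for `u, v` tangent to `S^{2n+1}` at `z`, with horizontal lifts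
`û^H = (0,u) − (1−τ²) g(u,iz) · i·(τ/√(1−τ²), z)`, one has
`g(û^H, v̂^H) = g(u,v) − (1−τ²) g(u,iz) g(v,iz)`. -/
theorem dF_isometry (n : ℕ) (τ : ℝ) (hτ0 : 0 < τ) (hτ1 : τ < 1)
    (z u v : Fin (n + 1) → ℂ) (hz : gR z z = 1)
    (hu : gR u z = 0) (hv : gR v z = 0) :
    gR ((Fin.cons 0 u : Fin (n + 2) → ℂ) -
          ((1 - τ ^ 2) * gR u (Complex.I • z)) •
            (Complex.I • (Fin.cons ((τ / Real.sqrt (1 - τ ^ 2) : ℝ) : ℂ) z : Fin (n + 2) → ℂ)))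
        ((Fin.cons 0 v : Fin (n + 2) → ℂ) -
          ((1 - τ ^ 2) * gR v (Complex.I • z)) •
            (Complex.I • (Fin.cons ((τ / Real.sqrt (1 - τ ^ 2) : ℝ) : ℂ) z : Fin (n + 2) → ℂ)))
      = gR u v - (1 - τ ^ 2) * gR u (Complex.I • z) * gR v (Complex.I • z) := by
  have h1 : (0:ℝ) < 1 - τ ^ 2 := by nlinarith
  set c : ℝ := τ / Real.sqrt (1 - τ ^ 2) with hc
  set a : ℝ := (1 - τ ^ 2) * gR u (Complex.I • z) with ha
  set b : ℝ := (1 - τ ^ 2) * gR v (Complex.I • z) with hb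
  have huv : gR (Fin.cons 0 u : Fin (n + 2) → ℂ) (Fin.cons 0 v) = gR u v := by
    unfold gR; rw [Fin.sum_univ_succ]; simp
  rw [gR_expand, gR_cons_smulI,
    gR_comm (Complex.I • (Fin.cons (c:ℂ) z : Fin (n+2) → ℂ)) (Fin.cons 0 v),
    gR_cons_smulI, gR_cons_self, huv, hz]
  have hcsq : c ^ 2 = τ ^ 2 / (1 - τ ^ 2) := by
    rw [hc, div_pow, Real.sq_sqrt h1.le]
  rw [hcsq, ha, hb]
  field_simp
  ring
end

section
/- If μ_{k,p} = k(2n+k) + ((1−τ²)/τ²)(k−2p)² with integers k ≥ 0 and 0 ≤ p ≤ ⌊k/2⌋, and ρ = (2n+1+k)(k−1) + ((1−τ²)/τ²)(k−2p±1)² (either sign), then ρ > 0 for all k ≥ 2; for k = 0 (hence p = 0) one gets ρ = 1/τ² − (2n+2), which is > 0 iff τ² < 1/(2n+2), = 0 iff τ² = 1/(2n+2), and < 0 iff τ² > 1/(2n+2); and for k = 1 (hence p = 0) one of the signs gives ρ = 0. -/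
/-- Sign analysis of the Jacobi eigenvalues
`ρ = (2n+1+k)(k−1) + ((1−τ²)/τ²)(k−2p±1)²` of the totally geodesic Berger sphere:
`ρ > 0` for `k ≥ 2`; for `k = 0` (so `p = 0`) one gets `ρ = 1/τ² − (2n+2)` with the sign
determined by the comparison of `τ²` with `1/(2n+2)`; and for `k = 1` (so `p = 0`) the
minus sign gives `ρ = 0`. -/
theorem jacobi_eigenvalues_totally_geodesic_berger (n : ℕ) (τ : ℝ)
    (hτ0 : 0 < τ) (hτ1 : τ ≤ 1) :
    (∀ k p : ℕ, 2 ≤ k → 2 * p ≤ k → ∀ ε : ℝ, ε = 1 ∨ ε = -1 →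
      0 < (2 * (n : ℝ) + 1 + k) * ((k : ℝ) - 1)
          + ((1 - τ ^ 2) / τ ^ 2) * ((k : ℝ) - 2 * p + ε) ^ 2) ∧
    ((2 * (n : ℝ) + 1 + 0) * ((0 : ℝ) - 1)
        + ((1 - τ ^ 2) / τ ^ 2) * ((0 : ℝ) - 2 * 0 + 1) ^ 2
      = 1 / τ ^ 2 - (2 * n + 2)) ∧
    (0 < 1 / τ ^ 2 - (2 * (n : ℝ) + 2) ↔ τ ^ 2 < 1 / (2 * n + 2)) ∧
    (1 / τ ^ 2 - (2 * (n : ℝ) + 2) = 0 ↔ τ ^ 2 = 1 / (2 * n + 2)) ∧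
    (1 / τ ^ 2 - (2 * (n : ℝ) + 2) < 0 ↔ 1 / (2 * (n : ℝ) + 2) < τ ^ 2) ∧
    ((2 * (n : ℝ) + 1 + 1) * ((1 : ℝ) - 1)
        + ((1 - τ ^ 2) / τ ^ 2) * ((1 : ℝ) - 2 * 0 - 1) ^ 2 = 0) := by

  have hτ2 : (0:ℝ) < τ ^ 2 := by positivity
  have hτ2ne : (τ:ℝ) ^ 2 ≠ 0 := ne_of_gt hτ2
  have hquot : 0 ≤ (1 - τ ^ 2) / τ ^ 2 := by
    apply div_nonneg _ hτ2.le
    nlinarith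
  have hd : (0:ℝ) < 2 * (n:ℝ) + 2 := by positivity
  refine ⟨?_, ?_, ?_, ?_, ?_, ?_⟩
  · intro k p hk _ ε hε
    have hk' : (2:ℝ) ≤ k := by exact_mod_cast hk
    have h1 : 0 < (2 * (n : ℝ) + 1 + k) * ((k : ℝ) - 1) := by nlinarith
    have h2 : 0 ≤ ((1 - τ ^ 2) / τ ^ 2) * ((k : ℝ) - 2 * p + ε) ^ 2 :=
      mul_nonneg hquot (sq_nonneg _)
    linarith
  · field_simp; ring
  · rw [lt_div_iff₀ hd, sub_pos, lt_div_iff₀ hτ2]; constructor <;> intro h <;> nlinarith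
  · rw [sub_eq_zero, eq_div_iff hd.ne', div_eq_iff hτ2ne]
    constructor <;> intro h <;> nlinarith
  · rw [div_lt_iff₀ hd, sub_neg, div_lt_iff₀ hτ2]; constructor <;> intro h <;> nlinarith
  · norm_num
end

section
/- For the family of eigenvalues ρ_±(k) = (k²/s² − 1) + ((1−τ²)/τ²)(k/s ± 1)², with s a positive integer and k a nonnegative integer: if τ² ≤ 1/(2s) then ρ_±(k) ≥ 0 for all k ≥ 0; moreover ρ_−(s−1) = (1/s²)(1/τ² − 2s), which is negative if and only if τ² > 1/(2s). Hence the closed geodesic z ↦ (z^s,0,…,0) in S^{2n+1}_τ (whose Jacobi eigenvalues are exactly the ρ_±(k)) is stable if and only if τ² ≤ 1/(2s). -/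
/-- For `ρ_±(k) = (k²/s² − 1) + ((1−τ²)/τ²)(k/s ± 1)²`: if `τ² ≤ 1/(2s)` then
`ρ_±(k) ≥ 0` for all `k ≥ 0`; moreover `ρ_−(s−1) = (1/τ² − 2s)/s²`, which is negative iff
`τ² > 1/(2s)`. Hence the closed geodesic `z ↦ (z^s,0,…,0)` (whose Jacobi eigenvalues are
exactly the `ρ_±(k)`) is stable iff `τ² ≤ 1/(2s)`. -/
theorem stability_closed_geodesic (s : ℕ) (hs : 0 < s) (τ : ℝ)
    (hτ0 : 0 < τ) (hτ1 : τ ≤ 1) :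
    (τ ^ 2 ≤ 1 / (2 * s) → ∀ k : ℕ, ∀ ε : ℝ, ε = 1 ∨ ε = -1 →
      0 ≤ ((k : ℝ) ^ 2 / (s : ℝ) ^ 2 - 1)
          + ((1 - τ ^ 2) / τ ^ 2) * ((k : ℝ) / s + ε) ^ 2) ∧
    ((((s : ℝ) - 1) ^ 2 / (s : ℝ) ^ 2 - 1)
        + ((1 - τ ^ 2) / τ ^ 2) * (((s : ℝ) - 1) / s - 1) ^ 2
      = (1 / τ ^ 2 - 2 * s) / (s : ℝ) ^ 2) ∧
    ((((s : ℝ) - 1) ^ 2 / (s : ℝ) ^ 2 - 1)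
        + ((1 - τ ^ 2) / τ ^ 2) * (((s : ℝ) - 1) / s - 1) ^ 2 < 0
      ↔ 1 / (2 * (s : ℝ)) < τ ^ 2) ∧
    ((∀ k : ℕ, ∀ ε : ℝ, ε = 1 ∨ ε = -1 →
        0 ≤ ((k : ℝ) ^ 2 / (s : ℝ) ^ 2 - 1)
            + ((1 - τ ^ 2) / τ ^ 2) * ((k : ℝ) / s + ε) ^ 2)
      ↔ τ ^ 2 ≤ 1 / (2 * s)) := by
  have hS : (0:ℝ) < (s:ℝ) := by exact_mod_cast hs
  have hS1 : (1:ℝ) ≤ (s:ℝ) := by exact_mod_cast hs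
  have hτ2 : (0:ℝ) < τ ^ 2 := by positivity
  have hc : (0:ℝ) ≤ 1 - τ ^ 2 := by nlinarith
  -- main nonnegativity
  have main : τ ^ 2 ≤ 1 / (2 * s) → ∀ k : ℕ, ∀ ε : ℝ, ε = 1 ∨ ε = -1 →
      0 ≤ ((k : ℝ) ^ 2 / (s : ℝ) ^ 2 - 1)
          + ((1 - τ ^ 2) / τ ^ 2) * ((k : ℝ) / s + ε) ^ 2 := by
    intro hτ k ε hε
    have h2s : 2 * (s:ℝ) * τ ^ 2 ≤ 1 := by
      have := (le_div_iff₀ (by positivity : (0:ℝ) < 2 * (s:ℝ))).mp hτ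
      linarith
    set a : ℝ := (k : ℝ) with ha
    have ha0 : 0 ≤ a := Nat.cast_nonneg k
    have hE : 0 ≤ τ ^ 2 * (a ^ 2 - (s:ℝ) ^ 2) + (1 - τ ^ 2) * (a + ε * s) ^ 2 := by
      rcases hε with h | h
      · subst h
        nlinarith [mul_nonneg (by linarith : (0:ℝ) ≤ a + (s:ℝ) - 2 * s * τ ^ 2)
          (by linarith : (0:ℝ) ≤ a + (s:ℝ))]
      · subst h
        rcases le_or_gt (s:ℝ) a with hks | hks
        · nlinarith [mul_nonneg (by nlinarith : (0:ℝ) ≤ a - (s:ℝ) + 2 * s * τ ^ 2)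
            (by linarith : (0:ℝ) ≤ a - (s:ℝ))]
        · have hk1 : a ≤ (s:ℝ) - 1 := by
            have : k < s := by rw [ha] at hks; exact_mod_cast hks
            have : (k:ℝ) + 1 ≤ (s:ℝ) := by exact_mod_cast this
            linarith
          nlinarith [mul_nonneg (by linarith : (0:ℝ) ≤ (s:ℝ) - a - 2 * s * τ ^ 2 + 2 * s * τ ^ 2)
            (by linarith : (0:ℝ) ≤ (s:ℝ) - a),
            mul_nonneg (by linarith : (0:ℝ) ≤ 1 - 2 * s * τ ^ 2)
            (by linarith : (0:ℝ) ≤ (s:ℝ) - a)]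
    have heq : ((a : ℝ) ^ 2 / (s : ℝ) ^ 2 - 1)
          + ((1 - τ ^ 2) / τ ^ 2) * ((a : ℝ) / s + ε) ^ 2
        = (τ ^ 2 * (a ^ 2 - (s:ℝ) ^ 2) + (1 - τ ^ 2) * (a + ε * s) ^ 2)
            / ((s:ℝ) ^ 2 * τ ^ 2) := by
      field_simp
    rw [heq]
    exact div_nonneg hE (by positivity)
  -- identity
  have hid : (((s : ℝ) - 1) ^ 2 / (s : ℝ) ^ 2 - 1)
        + ((1 - τ ^ 2) / τ ^ 2) * (((s : ℝ) - 1) / s - 1) ^ 2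
      = (1 / τ ^ 2 - 2 * s) / (s : ℝ) ^ 2 := by
    field_simp
    ring
  -- negativity iff
  have hiff : (((s : ℝ) - 1) ^ 2 / (s : ℝ) ^ 2 - 1)
        + ((1 - τ ^ 2) / τ ^ 2) * (((s : ℝ) - 1) / s - 1) ^ 2 < 0
      ↔ 1 / (2 * (s : ℝ)) < τ ^ 2 := by
    rw [hid, div_lt_iff₀ (by positivity : (0:ℝ) < (s:ℝ) ^ 2), zero_mul, sub_neg,
      div_lt_iff₀ hτ2, div_lt_iff₀ (by positivity : (0:ℝ) < 2 * (s:ℝ))]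
    constructor <;> intro h <;> nlinarith
  refine ⟨main, hid, hiff, ?_, main⟩
  intro h
  by_contra h'
  push_neg at h'
  have hneg := hiff.mpr h'
  have hval := h (s - 1) (-1) (Or.inr rfl)
  have hcast : ((s - 1 : ℕ) : ℝ) = (s:ℝ) - 1 := by
    have := Nat.cast_sub (R := ℝ) hs
    simpa using this
  rw [hcast, (by ring : ((s:ℝ) - 1) / s + (-1) = ((s:ℝ) - 1) / s - 1)] at hval
  exact absurd hval (not_le.mpr hneg)
end

section
/- For ρ_±(k,p) = (1/2)(1 + k(2+k)) + (1/(4τ²))(k − 2p ± 4)² − 8 − (1/2)(k − 2p ± 1)², where k ≥ 0 and 0 ≤ p ≤ ⌊k/2⌋ are integers: if τ² ≤ 1/8 then ρ_±(k,p) ≥ 0 for all admissible (k,p). In particular the minimal immersion of S³ onto the Veronese-type submanifold of S⁵_τ is stable for τ² ≤ 1/8. -/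
/-- If `τ² ≤ 1/8` then the Jacobi eigenvalues
`ρ_±(k,p) = (1/2)(1 + k(2+k)) + (1/(4τ²))(k−2p±4)² − 8 − (1/2)(k−2p±1)²` of the minimal
immersion of `S³` onto the Veronese-type submanifold of `S⁵_τ` are all nonnegative, i.e.
the immersion is stable. -/
theorem veronese_stable (τ : ℝ) (hτ0 : 0 < τ) (hτ1 : τ ≤ 1) (h : τ ^ 2 ≤ 1 / 8) :
    ∀ k p : ℕ, 2 * p ≤ k → ∀ ε : ℝ, ε = 1 ∨ ε = -1 →
      0 ≤ (1 / 2) * (1 + (k : ℝ) * (2 + k))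
          + (1 / (4 * τ ^ 2)) * ((k : ℝ) - 2 * p + 4 * ε) ^ 2
          - 8 - (1 / 2) * ((k : ℝ) - 2 * p + ε) ^ 2 := by
  intro k p hkp ε hε
  have hτ2 : 0 < τ ^ 2 := by positivity
  have hc : (2 : ℝ) ≤ 1 / (4 * τ ^ 2) := by
    rw [le_div_iff₀ (by positivity)]
    nlinarith
  set m : ℕ := k - 2 * p with hmdef
  have hM : (k : ℝ) - 2 * p = (m : ℝ) := by
    have : (m : ℝ) = (k : ℝ) - (2 * p : ℕ) := Nat.cast_sub hkp
    push_cast at this ⊢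
    linarith
  have hkm : (m : ℝ) ≤ (k : ℝ) := by
    have : m ≤ k := Nat.sub_le _ _
    exact_mod_cast this
  have hm0 : (0 : ℝ) ≤ (m : ℝ) := Nat.cast_nonneg _
  rw [hM]
  rcases hε with rfl | rfl
  · have h1 : (0 : ℝ) ≤ (1 / (4 * τ ^ 2) - 2) * ((m : ℝ) + 4 * 1) ^ 2 := by
      apply mul_nonneg (by linarith) (sq_nonneg _)
    nlinarith [sq_nonneg ((m : ℝ) + 4)]
  · have hint : (0 : ℝ) ≤ ((m : ℝ) - 3) * ((m : ℝ) - 4) := by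
      rcases le_or_gt m 3 with hm | hm
      · have : (m : ℝ) ≤ 3 := by exact_mod_cast hm
        nlinarith
      · have : (4 : ℝ) ≤ (m : ℝ) := by exact_mod_cast hm
        nlinarith
    have h1 : (0 : ℝ) ≤ (1 / (4 * τ ^ 2) - 2) * ((m : ℝ) + 4 * (-1)) ^ 2 := by
      apply mul_nonneg (by linarith) (sq_nonneg _)
    nlinarith
end

section
/- For the canonical product embedding of S^{d₁}(r₁) × S^{d₂}(r₂) into S^{2n+1} ⊂ ℂ^{n+1} with d₁+d₂ = 2n, r₁ = √(d₁/(2n)), r₂ = √(d₂/(2n)), and unit normal N_{(p,q)} = (√(d₂/d₁) p, −√(d₁/d₂) q): the vector i(p,q) is tangent to S^{d₁}(r₁) × S^{d₂}(r₂) at every point (p,q) (equivalently g(N_{(p,q)}, i(p,q)) = 0 for all (p,q)) if and only if d₁ and d₂ are odd and, up to a unitary change of coordinates, the product is {(z,w) ∈ ℂ^{m₁+1} × ℂ^{m₂+1} : |z| = r₁, |w| = r₂} with d_j = 2m_j + 1. -/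
open scoped RealInnerProductSpace

section Helpers
variable {V : Type*} [NormedAddCommGroup V] [InnerProductSpace ℝ V]

lemma skewJ (J : V ≃ₗᵢ[ℝ] V) (hJ : ∀ x : V, J (J x) = -x) (x y : V) :
    ⟪J x, y⟫ = -⟪x, J y⟫ := by
  have h := J.inner_map_map x (J y)
  rw [hJ, inner_neg_right] at h
  linarith

lemma innerJself (J : V ≃ₗᵢ[ℝ] V) (hJ : ∀ x : V, J (J x) = -x) (x : V) :
    ⟪x, J x⟫ = 0 := by
  have h1 := skewJ J hJ x x
  have h2 : ⟪J x, x⟫ = ⟪x, J x⟫ := real_inner_comm _ _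
  linarith

lemma even_finrank_of_invariant [FiniteDimensional ℝ V]
    (J : V ≃ₗᵢ[ℝ] V) (hJ : ∀ x : V, J (J x) = -x)
    (W : Submodule ℝ V) (hWJ : ∀ p ∈ W, J p ∈ W) :
    Even (Module.finrank ℝ W) := by
  set f : W →ₗ[ℝ] W := (J.toLinearEquiv.toLinearMap).restrict hWJ with hf
  have hff : f ∘ₗ f = -LinearMap.id := by
    ext x
    simpa [f, LinearMap.restrict_apply] using hJ x
  have hdet : f.det * f.det = (-1 : ℝ) ^ Module.finrank ℝ W := by
    have h1 : LinearMap.det (f ∘ₗ f) = f.det * f.det := LinearMap.det_comp f f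
    rw [hff] at h1
    have h2 : (-LinearMap.id : W →ₗ[ℝ] W) = (-1 : ℝ) • LinearMap.id := by
      ext x; simp
    rw [h2, LinearMap.det_smul, LinearMap.det_id, mul_one] at h1
    linarith
  by_contra hodd
  rw [Nat.not_even_iff_odd] at hodd
  rw [Odd.neg_one_pow hodd] at hdet
  nlinarith [mul_self_nonneg f.det]

end Helpers

/-- For the canonical product embedding of `S^{d₁}(r₁) × S^{d₂}(r₂)` into
`S^{2n+1} ⊂ ℂ^{n+1}` (modelled by an orthogonal complex structure `J` on a real inner
product space `V` of dimension `2n+2` and an orthogonal splitting `V = W ⊕ Wᗮ` with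
`dim W = d₁+1`): the unit normal `N = (√(d₂/d₁) p, −√(d₁/d₂) q)` is orthogonal to
`i(p,q) = J(p+q)` at every point of the product if and only if `d₁` and `d₂` are odd and
(up to unitary change of coordinates) the splitting is complex, i.e. `J` preserves `W`. -/
theorem clifford_tangency (n d₁ d₂ : ℕ) (hd₁ : 1 ≤ d₁) (hd₂ : 1 ≤ d₂)
    (hd : d₁ + d₂ = 2 * n)
    {V : Type*} [NormedAddCommGroup V] [InnerProductSpace ℝ V] [FiniteDimensional ℝ V]
    (hdim : Module.finrank ℝ V = 2 * n + 2)
    (J : V ≃ₗᵢ[ℝ] V) (hJ : ∀ x : V, J (J x) = -x)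
    (W : Submodule ℝ V) (hW : Module.finrank ℝ W = d₁ + 1) :
    (∀ p ∈ W, ∀ q ∈ Wᗮ,
        ‖p‖ = Real.sqrt ((d₁ : ℝ) / (2 * n)) → ‖q‖ = Real.sqrt ((d₂ : ℝ) / (2 * n)) →
        ⟪Real.sqrt ((d₂ : ℝ) / d₁) • p - Real.sqrt ((d₁ : ℝ) / d₂) • q, J (p + q)⟫ = 0)
      ↔ (Odd d₁ ∧ Odd d₂ ∧ ∀ p ∈ W, J p ∈ W) := by

  have hn : 1 ≤ n := by omega
  have ha : (0:ℝ) < Real.sqrt ((d₂ : ℝ) / d₁) := Real.sqrt_pos.mpr (by positivity)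
  have hb : (0:ℝ) < Real.sqrt ((d₁ : ℝ) / d₂) := Real.sqrt_pos.mpr (by positivity)
  have hr₁ : (0:ℝ) < Real.sqrt ((d₁ : ℝ) / (2*n)) := Real.sqrt_pos.mpr (by positivity)
  have hr₂ : (0:ℝ) < Real.sqrt ((d₂ : ℝ) / (2*n)) := Real.sqrt_pos.mpr (by positivity)
  constructor
  · intro h
    have key : ∀ p ∈ W, ∀ q ∈ Wᗮ, ⟪p, J q⟫ = 0 := by
      intro p hp q hq
      rcases eq_or_ne p 0 with rfl | hp0
      · simp
      rcases eq_or_ne q 0 with rfl | hq0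
      · simp
      have hpn : (0:ℝ) < ‖p‖ := norm_pos_iff.mpr hp0
      have hqn : (0:ℝ) < ‖q‖ := norm_pos_iff.mpr hq0
      set c := Real.sqrt ((d₁ : ℝ) / (2*n)) / ‖p‖ with hc
      set e := Real.sqrt ((d₂ : ℝ) / (2*n)) / ‖q‖ with he
      have hcpos : 0 < c := by positivity
      have hepos : 0 < e := by positivity
      have hnp : ‖c • p‖ = Real.sqrt ((d₁ : ℝ) / (2*n)) := by
        rw [norm_smul, Real.norm_eq_abs, abs_of_pos hcpos, hc, div_mul_cancel₀ _ hpn.ne']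
      have hnq : ‖e • q‖ = Real.sqrt ((d₂ : ℝ) / (2*n)) := by
        rw [norm_smul, Real.norm_eq_abs, abs_of_pos hepos, he, div_mul_cancel₀ _ hqn.ne']
      have hh := h (c • p) (W.smul_mem c hp) (e • q) (Wᗮ.smul_mem e hq) hnp hnq
      have e1 : ⟪p, J p⟫ = 0 := innerJself J hJ p
      have e2 : ⟪q, J q⟫ = 0 := innerJself J hJ q
      have e3 : ⟪q, J p⟫ = -⟪p, J q⟫ := by
        rw [real_inner_comm]; exact skewJ J hJ p q
      simp only [inner_sub_left, map_add, inner_add_right, real_inner_smul_left,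
        map_smul, real_inner_smul_right, e1, e2, e3] at hh
      have hsum : (Real.sqrt ((d₂ : ℝ) / d₁) + Real.sqrt ((d₁ : ℝ) / d₂)) * (c * e * ⟪p, J q⟫) = 0 := by
        linear_combination hh
      rcases mul_eq_zero.mp hsum with h' | h'
      · exact absurd h' (by positivity : (0:ℝ) < _).ne'
      · rcases mul_eq_zero.mp h' with h'' | h''
        · exact absurd h'' (by positivity : (0:ℝ) < c * e).ne'
        · exact h''
    have hWJ : ∀ p ∈ W, J p ∈ W := by
      intro p hp
      rw [← Submodule.orthogonal_orthogonal W]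
      rw [Submodule.mem_orthogonal]
      intro q hq
      rw [real_inner_comm, skewJ J hJ p q, key p hp q hq, neg_zero]
    have hWoJ : ∀ q ∈ Wᗮ, J q ∈ Wᗮ := by
      intro q hq
      rw [Submodule.mem_orthogonal]
      intro p hp
      exact key p hp q hq
    have hevW : Even (d₁ + 1) := hW ▸ even_finrank_of_invariant J hJ W hWJ
    have hrk : Module.finrank ℝ W + Module.finrank ℝ Wᗮ = Module.finrank ℝ V :=
      Submodule.finrank_add_finrank_orthogonal W
    have hWo : Module.finrank ℝ Wᗮ = d₂ + 1 := by omega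
    have hevWo : Even (d₂ + 1) := hWo ▸ even_finrank_of_invariant J hJ Wᗮ hWoJ
    refine ⟨?_, ?_, hWJ⟩
    · rw [Nat.odd_iff]; rw [Nat.even_iff] at hevW; omega
    · rw [Nat.odd_iff]; rw [Nat.even_iff] at hevWo; omega
  · rintro ⟨-, -, hWJ⟩ p hp q hq _ _
    have e1 : ⟪p, J p⟫ = 0 := innerJself J hJ p
    have e2 : ⟪q, J q⟫ = 0 := innerJself J hJ q
    have e3 : ⟪p, J q⟫ = 0 := by
      have h4 : ⟪J p, q⟫ = 0 := (Submodule.mem_orthogonal W q).mp hq (J p) (hWJ p hp)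
      have := skewJ J hJ p q
      linarith
    have e4 : ⟪q, J p⟫ = 0 := by rw [real_inner_comm]; rw [skewJ J hJ p q, e3, neg_zero]
    simp [inner_sub_left, map_add, inner_add_right, real_inner_smul_left, e1, e2, e3, e4]
end

section
/- Let μ_{k₁,k₂,p} = 2n(k₁(2m₁+k₁)/(2m₁+1) + k₂(2m₂+k₂)/(2m₂+1)) + ((1−τ²)/τ²)(k₁+k₂−2p)² with n = m₁+m₂+1, and consider the Jacobi eigenvalues μ_{k₁,k₂,p} − 4n. Then: μ_{0,0,0} − 4n = −4n < 0; μ_{1,0,0} − 4n = μ_{0,1,0} − 4n = 1/τ² − (2n+1), which is negative iff τ² > 1/(2n+1) and zero iff τ² = 1/(2n+1); μ_{1,1,1} − 4n = 0; and μ_{k₁,k₂,p} − 4n > 0 for all other admissible (k₁,k₂,p) (integers k₁,k₂ ≥ 0, 0 ≤ p ≤ ⌊(k₁+k₂)/2⌋) when τ² ≤ 1/(2n+1). -/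
/-- Eigenvalue `μ_{k₁,k₂,p}` of the Laplacian of the Clifford hypersurface
`S^{2m₁+1}(r₁) × S^{2m₂+1}(r₂) ⊂ S^{2n+1}_τ`, where `n = m₁+m₂+1`. -/
noncomputable def muClifford (m₁ m₂ : ℕ) (τ : ℝ) (k₁ k₂ p : ℕ) : ℝ :=
  2 * ((m₁ : ℝ) + m₂ + 1) *
      ((k₁ : ℝ) * (2 * m₁ + k₁) / (2 * m₁ + 1) + (k₂ : ℝ) * (2 * m₂ + k₂) / (2 * m₂ + 1))
    + ((1 - τ ^ 2) / τ ^ 2) * ((k₁ : ℝ) + k₂ - 2 * p) ^ 2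

set_option maxHeartbeats 800000 in
/-- Sign analysis of the Jacobi eigenvalues `μ_{k₁,k₂,p} − 4n` of the Clifford
hypersurface: `μ_{0,0,0} − 4n = −4n < 0`; `μ_{1,0,0} − 4n = μ_{0,1,0} − 4n = 1/τ² − (2n+1)`,
negative iff `τ² > 1/(2n+1)` and zero iff `τ² = 1/(2n+1)`; `μ_{1,1,1} − 4n = 0`; all other
admissible `(k₁,k₂,p)` give `μ − 4n > 0` when `τ² ≤ 1/(2n+1)`. -/
theorem clifford_jacobi_sign (m₁ m₂ : ℕ) (τ : ℝ) (hτ0 : 0 < τ) (hτ1 : τ ≤ 1) :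
    (muClifford m₁ m₂ τ 0 0 0 - 4 * ((m₁ : ℝ) + m₂ + 1) = -(4 * ((m₁ : ℝ) + m₂ + 1))) ∧
    (-(4 * ((m₁ : ℝ) + m₂ + 1)) < 0) ∧
    (muClifford m₁ m₂ τ 1 0 0 - 4 * ((m₁ : ℝ) + m₂ + 1)
      = 1 / τ ^ 2 - (2 * ((m₁ : ℝ) + m₂ + 1) + 1)) ∧
    (muClifford m₁ m₂ τ 0 1 0 - 4 * ((m₁ : ℝ) + m₂ + 1)
      = 1 / τ ^ 2 - (2 * ((m₁ : ℝ) + m₂ + 1) + 1)) ∧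
    (1 / τ ^ 2 - (2 * ((m₁ : ℝ) + m₂ + 1) + 1) < 0
      ↔ 1 / (2 * ((m₁ : ℝ) + m₂ + 1) + 1) < τ ^ 2) ∧
    (1 / τ ^ 2 - (2 * ((m₁ : ℝ) + m₂ + 1) + 1) = 0
      ↔ τ ^ 2 = 1 / (2 * ((m₁ : ℝ) + m₂ + 1) + 1)) ∧
    (muClifford m₁ m₂ τ 1 1 1 - 4 * ((m₁ : ℝ) + m₂ + 1) = 0) ∧
    (τ ^ 2 ≤ 1 / (2 * ((m₁ : ℝ) + m₂ + 1) + 1) →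
      ∀ k₁ k₂ p : ℕ, 2 * p ≤ k₁ + k₂ →
        ¬(k₁ = 0 ∧ k₂ = 0 ∧ p = 0) → ¬(k₁ = 1 ∧ k₂ = 0 ∧ p = 0) →
        ¬(k₁ = 0 ∧ k₂ = 1 ∧ p = 0) → ¬(k₁ = 1 ∧ k₂ = 1 ∧ p = 1) →
        0 < muClifford m₁ m₂ τ k₁ k₂ p - 4 * ((m₁ : ℝ) + m₂ + 1)) := by
  have hτ2 : (0:ℝ) < τ ^ 2 := by positivity
  have hτne : τ ≠ 0 := ne_of_gt hτ0
  have hNpos : (0:ℝ) < (m₁ : ℝ) + m₂ + 1 := by positivity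
  have hN1 : (1:ℝ) ≤ (m₁ : ℝ) + m₂ + 1 := by
    have := Nat.cast_nonneg (α := ℝ) m₁
    have := Nat.cast_nonneg (α := ℝ) m₂
    linarith
  have hM : (0:ℝ) < 2 * ((m₁ : ℝ) + m₂ + 1) + 1 := by linarith
  have hm1 : (0:ℝ) < 2 * (m₁ : ℝ) + 1 := by positivity
  have hm2 : (0:ℝ) < 2 * (m₂ : ℝ) + 1 := by positivity
  have key : ∀ (m k : ℕ), (k:ℝ) ≤ (k:ℝ) * (2 * (m:ℝ) + k) / (2 * (m:ℝ) + 1) := by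
    intro m k
    have hm : (0:ℝ) < 2 * (m:ℝ) + 1 := by positivity
    rw [le_div_iff₀ hm]
    have h1 : (k:ℝ) ≤ (k:ℝ) ^ 2 := by
      exact_mod_cast Nat.le_self_pow (two_ne_zero) k
    nlinarith [Nat.cast_nonneg (α := ℝ) m, Nat.cast_nonneg (α := ℝ) k]
  have keyS : ∀ (m k : ℕ), 2 ≤ k → (k:ℝ) < (k:ℝ) * (2 * (m:ℝ) + k) / (2 * (m:ℝ) + 1) := by
    intro m k hk
    have hm : (0:ℝ) < 2 * (m:ℝ) + 1 := by positivity
    rw [lt_div_iff₀ hm]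
    have hk' : (2:ℝ) ≤ (k:ℝ) := by exact_mod_cast hk
    nlinarith [Nat.cast_nonneg (α := ℝ) m]
  refine ⟨?_, ?_, ?_, ?_, ?_, ?_, ?_, ?_⟩
  · simp [muClifford]
  · linarith
  · simp only [muClifford, Nat.cast_one, Nat.cast_zero]
    field_simp
    ring
  · simp only [muClifford, Nat.cast_one, Nat.cast_zero]
    field_simp
    ring
  · rw [sub_neg, div_lt_iff₀ hτ2, div_lt_iff₀ hM, mul_comm]
  · rw [sub_eq_zero, div_eq_iff hτ2.ne', eq_div_iff (ne_of_gt hM)]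
    constructor <;> intro h <;> linarith
  · simp only [muClifford, Nat.cast_one]
    field_simp
    ring
  · intro hτ k₁ k₂ p hp h0 h1 h2 h3
    have hc : 2 * ((m₁ : ℝ) + m₂ + 1) ≤ (1 - τ ^ 2) / τ ^ 2 := by
      rw [le_div_iff₀ hτ2]
      rw [le_div_iff₀ hM] at hτ
      nlinarith
    have hsq : (0:ℝ) ≤ ((k₁:ℝ) + k₂ - 2 * p) ^ 2 := sq_nonneg _
    have hcD : (0:ℝ) ≤ (1 - τ ^ 2) / τ ^ 2 * ((k₁:ℝ) + k₂ - 2 * p) ^ 2 :=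
      mul_nonneg (by nlinarith) hsq
    simp only [muClifford]
    by_cases hbig : 2 ≤ k₁ ∨ 2 ≤ k₂
    · rcases hbig with h | h
      · have hA := keyS m₁ k₁ h
        have hB := key m₂ k₂
        have hk₁ : (2:ℝ) ≤ (k₁:ℝ) := by exact_mod_cast h
        have hk₂ : (0:ℝ) ≤ (k₂:ℝ) := Nat.cast_nonneg _
        have hAB : (0:ℝ) < (k₁:ℝ) * (2 * (m₁:ℝ) + k₁) / (2 * (m₁:ℝ) + 1)
            + (k₂:ℝ) * (2 * (m₂:ℝ) + k₂) / (2 * (m₂:ℝ) + 1) - 2 := by linarith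
        have hmain := mul_pos hNpos hAB
        linarith [hcD, hmain]
      · have hA := key m₁ k₁
        have hB := keyS m₂ k₂ h
        have hk₂ : (2:ℝ) ≤ (k₂:ℝ) := by exact_mod_cast h
        have hk₁ : (0:ℝ) ≤ (k₁:ℝ) := Nat.cast_nonneg _
        have hAB : (0:ℝ) < (k₁:ℝ) * (2 * (m₁:ℝ) + k₁) / (2 * (m₁:ℝ) + 1)
            + (k₂:ℝ) * (2 * (m₂:ℝ) + k₂) / (2 * (m₂:ℝ) + 1) - 2 := by linarith
        have hmain := mul_pos hNpos hAB
        linarith [hcD, hmain]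
    · push_neg at hbig
      obtain ⟨hk1, hk2⟩ : k₁ ≤ 1 ∧ k₂ ≤ 1 := ⟨by omega, by omega⟩
      interval_cases k₁ <;> interval_cases k₂
      · exact absurd ⟨rfl, rfl, by omega⟩ h0
      · exact absurd ⟨rfl, rfl, by omega⟩ h2
      · exact absurd ⟨rfl, rfl, by omega⟩ h1
      · -- k₁ = k₂ = 1, p ≤ 1
        have hp1 : p ≤ 1 := by omega
        interval_cases p
        · have hA := key m₁ 1
          have hB := key m₂ 1
          push_cast at hA hB ⊢
          nlinarith [mul_nonneg hNpos.le (sub_nonneg.2 hA),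
            mul_nonneg hNpos.le (sub_nonneg.2 hB), hc, hNpos]
        · exact absurd ⟨rfl, rfl, rfl⟩ h3
end
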